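/- arXiv:1312.1329 — 3 statements merged into one kernel-verified Lean document; each statement's English description precedes it below -/
import Mathlib

section
/- For any two density matrices ρ and σ on a finite-dimensional complex Hilbert space, the incompatibility measure satisfies Φ(ρ,σ) ≤ 1, i.e. 2·Tr([ρ,σ]†[ρ,σ]) ≤ 1. -/
open Matrix ComplexOrder

/-- A density matrix: positive semidefinite with unit trace. -/
def IsDensityMatrix {n : ℕ} (ρ : Matrix (Fin n) (Fin n) ℂ) : Prop :=
  ρ.PosSemidef ∧ ρ.trace = 1

/-- The incompatibility measure Φ(ρ,σ) := 2‖[ρ,σ]‖²_HS = 2·Tr([ρ,σ]†[ρ,σ]). -/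
noncomputable def Phi {n : ℕ} (ρ σ : Matrix (Fin n) (Fin n) ℂ) : ℝ :=
  2 * (((ρ * σ - σ * ρ)ᴴ * (ρ * σ - σ * ρ)).trace).re

/-! Diagonalise `ρ = U diag(p) U⋆` and set `τ = U⋆ σ U`, again a density matrix; `Φ` is invariant
under this unitary conjugation. The commutator `[diag(p), τ]` has entries `(pᵢ - pⱼ) τᵢⱼ`, and
`|τᵢⱼ|² ≤ τᵢᵢ τⱼⱼ` since `τ` is positive semidefinite. With the probability vector `s = diag τ`
this gives `Φ ≤ 2 ∑ᵢⱼ (pᵢ - pⱼ)² sᵢ sⱼ = 4 Var_s(p)`, and `p` takes values in `[0, 1]`, so its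
variance is at most `1/4`. -/

namespace Matrix

variable {𝕜 m n : Type*} [RCLike 𝕜]

theorem PosSemidef.norm_apply_sq_le {M : Matrix n n 𝕜} (hM : M.PosSemidef) (i j : n) :
    ‖M i j‖ ^ 2 ≤ RCLike.re (M i i) * RCLike.re (M j j) := by
  have hji : M j i = star (M i j) := by simpa using (hM.1.apply j i).symm
  have him : ∀ k, RCLike.im (M k k) = 0 := fun k => (RCLike.nonneg_iff.mp hM.diag_nonneg).2
  have hdet := (RCLike.nonneg_iff.mp (hM.submatrix ![i, j]).det_nonneg).1
  simpa only [det_fin_two, submatrix_apply, cons_val_zero, cons_val_one, hji, RCLike.star_def,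
    RCLike.mul_conj, map_sub, RCLike.mul_re, him, mul_zero, sub_zero, ← RCLike.ofReal_pow,
    RCLike.ofReal_re, sub_nonneg] using hdet

theorem re_trace_conjTranspose_mul_self [Fintype m] [Fintype n] (A : Matrix m n 𝕜) :
    RCLike.re (Aᴴ * A).trace = ∑ i, ∑ j, ‖A i j‖ ^ 2 := by
  simp only [trace, diag_apply, mul_apply, conjTranspose_apply, map_sum, RCLike.star_def,
    RCLike.conj_mul]
  rw [Finset.sum_comm]
  norm_cast

end Matrix

theorem sum_sum_sq_sub_mul_le_half {ι : Type*} [Fintype ι] {p s : ι → ℝ}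
    (hp0 : ∀ i, 0 ≤ p i) (hp1 : ∀ i, p i ≤ 1) (hs0 : ∀ i, 0 ≤ s i) (hs1 : ∑ i, s i = 1) :
    ∑ i, ∑ j, (p i - p j) ^ 2 * (s i * s j) ≤ 1 / 2 := by
  set m := ∑ i, s i * p i
  have hexpand :
      ∑ i, ∑ j, (p i - p j) ^ 2 * (s i * s j) = 2 * (∑ i, s i * p i ^ 2) - 2 * m ^ 2 := by
    have key : ∀ i j, (p i - p j) ^ 2 * (s i * s j)
        = (s i * p i ^ 2) * s j + s i * (s j * p j ^ 2) - 2 * ((s i * p i) * (s j * p j)) := by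
      intros; ring
    simp only [key, Finset.sum_sub_distrib, Finset.sum_add_distrib, ← Finset.sum_mul,
      ← Finset.mul_sum, hs1]
    ring
  have hsq : ∑ i, s i * p i ^ 2 ≤ m :=
    Finset.sum_le_sum fun i _ => mul_le_mul_of_nonneg_left (by nlinarith [hp0 i, hp1 i]) (hs0 i)
  nlinarith [sq_nonneg (1 - 2 * m)]

theorem trace_conjStarAlgAut {R n : Type*} [CommRing R] [StarRing R] [Fintype n] [DecidableEq n]
    (U : unitary (Matrix n n R)) (x : Matrix n n R) :
    (Unitary.conjStarAlgAut R _ U x).trace = x.trace := by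
  rw [Unitary.conjStarAlgAut_apply, trace_mul_cycle, Unitary.coe_star_mul_self, one_mul]

theorem Phi_conjStarAlgAut {n : ℕ} (U : unitary (Matrix (Fin n) (Fin n) ℂ))
    (ρ σ : Matrix (Fin n) (Fin n) ℂ) :
    Phi (Unitary.conjStarAlgAut ℂ _ U ρ) (Unitary.conjStarAlgAut ℂ _ U σ) = Phi ρ σ := by
  rw [Phi, Phi, ← map_mul, ← map_mul, ← map_sub, ← star_eq_conjTranspose, ← map_star, ← map_mul,
    trace_conjStarAlgAut, star_eq_conjTranspose]

theorem Phi_diagonal {n : ℕ} (p : Fin n → ℝ) (τ : Matrix (Fin n) (Fin n) ℂ) :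
    Phi (diagonal (fun i => (p i : ℂ))) τ = 2 * ∑ i, ∑ j, (p i - p j) ^ 2 * ‖τ i j‖ ^ 2 := by
  have hC : diagonal (fun i => (p i : ℂ)) * τ - τ * diagonal (fun i => (p i : ℂ))
      = Matrix.of fun i j => ((p i - p j : ℝ) : ℂ) * τ i j := by
    ext i j
    simp only [Matrix.sub_apply, diagonal_mul, mul_diagonal, of_apply, Complex.ofReal_sub]
    ring
  rw [Phi, hC, ← RCLike.re_eq_complex_re, re_trace_conjTranspose_mul_self]
  simp only [of_apply, norm_mul, mul_pow, Complex.norm_real, Real.norm_eq_abs, sq_abs]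

theorem IsDensityMatrix.conjStarAlgAut {n : ℕ} {ρ : Matrix (Fin n) (Fin n) ℂ}
    (hρ : IsDensityMatrix ρ) (U : unitary (Matrix (Fin n) (Fin n) ℂ)) :
    IsDensityMatrix (Unitary.conjStarAlgAut ℂ _ U ρ) := by
  refine ⟨?_, by rw [trace_conjStarAlgAut, hρ.2]⟩
  rw [Unitary.conjStarAlgAut_apply, star_eq_conjTranspose]
  exact hρ.1.mul_mul_conjTranspose_same _

namespace IsDensityMatrix

variable {n : ℕ} {ρ : Matrix (Fin n) (Fin n) ℂ}

theorem sum_eigenvalues (hρ : IsDensityMatrix ρ) : ∑ i, hρ.1.1.eigenvalues i = 1 := by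
  simpa [hρ.2] using congrArg Complex.re hρ.1.1.trace_eq_sum_eigenvalues.symm

theorem eigenvalues_le_one (hρ : IsDensityMatrix ρ) (i : Fin n) : hρ.1.1.eigenvalues i ≤ 1 :=
  hρ.sum_eigenvalues ▸
    Finset.single_le_sum (fun j _ => hρ.1.eigenvalues_nonneg j) (Finset.mem_univ i)

theorem re_diag_nonneg (hρ : IsDensityMatrix ρ) (i : Fin n) : 0 ≤ (ρ i i).re :=
  (Complex.nonneg_iff.mp hρ.1.diag_nonneg).1

theorem sum_re_diag (hρ : IsDensityMatrix ρ) : ∑ i, (ρ i i).re = 1 := by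
  simpa [trace] using congrArg Complex.re hρ.2

end IsDensityMatrix

theorem phi_le_one {n : ℕ} (ρ σ : Matrix (Fin n) (Fin n) ℂ)
    (hρ : IsDensityMatrix ρ) (hσ : IsDensityMatrix σ) :
    Phi ρ σ ≤ 1 := by
  set U := hρ.1.1.eigenvectorUnitary
  set p := hρ.1.1.eigenvalues
  set τ := Unitary.conjStarAlgAut ℂ _ (star U) σ
  have hτ : IsDensityMatrix τ := hσ.conjStarAlgAut _
  have hρσ : Phi ρ σ = Phi (diagonal fun i => (p i : ℂ)) τ := by
    conv_lhs => rw [hρ.1.1.spectral_theorem, ← (Unitary.conjStarAlgAut ℂ _ U).apply_symm_apply σ]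
    rw [Phi_conjStarAlgAut, Unitary.conjStarAlgAut_symm]
    rfl
  calc Phi ρ σ = 2 * ∑ i, ∑ j, (p i - p j) ^ 2 * ‖τ i j‖ ^ 2 := by rw [hρσ, Phi_diagonal]
    _ ≤ 2 * ∑ i, ∑ j, (p i - p j) ^ 2 * ((τ i i).re * (τ j j).re) := by
      gcongr with i _ j _
      exact hτ.1.norm_apply_sq_le i j
    _ ≤ 2 * (1 / 2) := by
      gcongr
      exact sum_sum_sq_sub_mul_le_half hρ.1.eigenvalues_nonneg hρ.eigenvalues_le_one
        hτ.re_diag_nonneg hτ.sum_re_diag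
    _ = 1 := by norm_num
end

section
/- Let ψ₁ and ψ₁⊥ be orthonormal vectors in a complex Hilbert space of dimension at least 2, let θ ∈ ℝ, and set ψ₂ := cos(θ)·ψ₁ + sin(θ)·ψ₁⊥. Then Φ(|ψ₁⟩⟨ψ₁|, |ψ₂⟩⟨ψ₂|) = sin²(2θ); in particular it is at most 1, with the maximum value 1 attained at θ = π/4. -/
open Matrix ComplexOrder

/-- The rank-one projection |ψ⟩⟨ψ| associated to a (unit) vector ψ. -/
def pureState {n : ℕ} (ψ : Fin n → ℂ) : Matrix (Fin n) (Fin n) ℂ :=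
  vecMulVec ψ (star ψ)

private lemma vmv_mul {n : ℕ} (a b c d : Fin n → ℂ) :
    vecMulVec a b * vecMulVec c d = (b ⬝ᵥ c) • vecMulVec a d := by
  ext i j
  simp only [Matrix.mul_apply, Matrix.vecMulVec_apply, Matrix.smul_apply, dotProduct,
    smul_eq_mul, Finset.sum_mul]
  exact Finset.sum_congr rfl fun k _ => by ring

private lemma trace_vmv {n : ℕ} (a b : Fin n → ℂ) :
    (vecMulVec a b).trace = a ⬝ᵥ b := by
  simp [Matrix.trace, Matrix.vecMulVec_apply, dotProduct, Matrix.diag]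

private lemma vmv_conjT {n : ℕ} (a b : Fin n → ℂ) :
    (vecMulVec a (star b))ᴴ = vecMulVec b (star a) := by
  ext i j
  simp [Matrix.conjTranspose_apply, Matrix.vecMulVec_apply, mul_comm]

theorem phi_two_dim_subspace {n : ℕ} (hn : 2 ≤ n)
    (ψ₁ ψ₁perp : Fin n → ℂ)
    (hψ₁ : star ψ₁ ⬝ᵥ ψ₁ = 1) (hperp : star ψ₁perp ⬝ᵥ ψ₁perp = 1)
    (horth : star ψ₁ ⬝ᵥ ψ₁perp = 0)
    (θ : ℝ) (ψ₂ : Fin n → ℂ)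
    (hψ₂ : ψ₂ = (Real.cos θ : ℂ) • ψ₁ + (Real.sin θ : ℂ) • ψ₁perp) :
    Phi (pureState ψ₁) (pureState ψ₂) = Real.sin (2 * θ) ^ 2 ∧
      Phi (pureState ψ₁) (pureState ψ₂) ≤ 1 ∧
      (θ = Real.pi / 4 → Phi (pureState ψ₁) (pureState ψ₂) = 1) := by
  set c : ℂ := (Real.cos θ : ℂ) with hc
  set s : ℂ := (Real.sin θ : ℂ) with hs
  have horth' : star ψ₁perp ⬝ᵥ ψ₁ = 0 := by
    have := congrArg star horth
    rwa [star_dotProduct, star_star, star_zero] at this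
  have h12 : star ψ₁ ⬝ᵥ ψ₂ = c := by
    simp [hψ₂, dotProduct_add, dotProduct_smul, hψ₁, horth]
  have h21 : star ψ₂ ⬝ᵥ ψ₁ = c := by
    have := congrArg star h12
    rwa [star_dotProduct, star_star, hc, Complex.star_def, Complex.conj_ofReal] at this
  have h22 : star ψ₂ ⬝ᵥ ψ₂ = 1 := by
    have : star ψ₂ = (starRingEnd ℂ c) • star ψ₁ + (starRingEnd ℂ s) • star ψ₁perp := by
      rw [hψ₂]; ext i; simp [mul_comm]
    rw [this]
    simp only [add_dotProduct, smul_dotProduct, hψ₂, dotProduct_add, dotProduct_smul,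
      hψ₁, hperp, horth, horth', smul_eq_mul]
    rw [hc, hs]
    simp only [Complex.conj_ofReal]
    push_cast
    rw [mul_zero, mul_zero, mul_one, mul_one]
    ring_nf
    norm_cast
    nlinarith [Real.sin_sq_add_cos_sq θ]
  -- matrices
  set V12 := vecMulVec ψ₁ (star ψ₂) with hV12
  set V21 := vecMulVec ψ₂ (star ψ₁) with hV21
  have e1 : pureState ψ₁ * pureState ψ₂ = c • V12 := by
    rw [pureState, pureState, vmv_mul, h12]
  have e2 : pureState ψ₂ * pureState ψ₁ = c • V21 := by
    rw [pureState, pureState, vmv_mul, h21]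
  have eC : pureState ψ₁ * pureState ψ₂ - pureState ψ₂ * pureState ψ₁
      = c • (V12 - V21) := by rw [e1, e2, smul_sub]
  have hcstar : star c = c := by rw [hc, Complex.star_def, Complex.conj_ofReal]
  have eCH : (c • (V12 - V21))ᴴ = c • (V21 - V12) := by
    rw [Matrix.conjTranspose_smul, Matrix.conjTranspose_sub, hV12, hV21,
      vmv_conjT, vmv_conjT, hcstar]
  have etr : (((pureState ψ₁ * pureState ψ₂ - pureState ψ₂ * pureState ψ₁)ᴴ *
      (pureState ψ₁ * pureState ψ₂ - pureState ψ₂ * pureState ψ₁)).trace)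
      = (c * c) * (2 - 2 * (c * c)) := by
    rw [eC, eCH, Matrix.smul_mul, Matrix.mul_smul, smul_smul]
    rw [Matrix.sub_mul, Matrix.mul_sub, Matrix.mul_sub]
    rw [hV12, hV21, vmv_mul, vmv_mul, vmv_mul, vmv_mul]
    simp only [Matrix.trace_smul, Matrix.trace_sub, trace_vmv, smul_eq_mul]
    rw [dotProduct_comm ψ₂ (star ψ₂), dotProduct_comm ψ₂ (star ψ₁),
      dotProduct_comm ψ₁ (star ψ₂), dotProduct_comm ψ₁ (star ψ₁)]
    simp only [h12, h21, h22, hψ₁]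
    ring
  have ephi : Phi (pureState ψ₁) (pureState ψ₂)
      = Real.sin (2 * θ) ^ 2 := by
    rw [Phi, etr, hc]
    have : ((Real.cos θ : ℂ) * (Real.cos θ : ℂ)) * (2 - 2 * ((Real.cos θ : ℂ) * (Real.cos θ : ℂ)))
        = ((Real.cos θ * Real.cos θ * (2 - 2 * (Real.cos θ * Real.cos θ)) : ℝ) : ℂ) := by
      push_cast; ring
    rw [this, Complex.ofReal_re, Real.sin_two_mul]
    nlinarith [Real.sin_sq_add_cos_sq θ]
  refine ⟨ephi, ?_, ?_⟩
  · rw [ephi]; exact Real.sin_sq_le_one _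
  · intro hθ
    rw [ephi, hθ]
    have : 2 * (Real.pi / 4) = Real.pi / 2 := by ring
    rw [this, Real.sin_pi_div_two]; norm_num
end

section
/- For unit vectors ψ and φ in a finite-dimensional complex Hilbert space, Φ(|ψ⟩⟨ψ|, |φ⟩⟨φ|) ≤ 1, with equality if and only if |⟨ψ|φ⟩|² = 1/2. -/
open Matrix ComplexOrder

/-!
For orthogonal projections `P`, `Q`, cyclicity of the trace gives
`Tr([P,Q]†[P,Q]) = 2 Tr(PQ) - 2 Tr(PQPQ)`. For rank-one projections onto unit vectors `ψ`, `φ`,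
`PQ` is itself rank one with trace `t = |⟨ψ|φ⟩|²`, so `Tr(PQPQ) = t²` and `Φ = 4t(1 - t)`,
and `1 - 4t(1 - t) = (2t - 1)²`.
-/

namespace Matrix

variable {m R : Type*} [Fintype m] [CommRing R]

theorem trace_conjTranspose_commutator_mul_commutator [StarRing R] {P Q : Matrix m m R}
    (hP : P.IsHermitian) (hQ : Q.IsHermitian)
    (hP' : IsIdempotentElem P) (hQ' : IsIdempotentElem Q) :
    ((P * Q - Q * P)ᴴ * (P * Q - Q * P)).trace =
      2 * (P * Q).trace - 2 * (P * Q * (P * Q)).trace := by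
  have hQPPQ : (Q * P * (P * Q)).trace = (P * Q).trace := by
    rw [mul_assoc, ← mul_assoc P, hP'.eq, trace_mul_comm, mul_assoc, hQ'.eq]
  have hPQQP : (P * Q * (Q * P)).trace = (P * Q).trace := by
    rw [mul_assoc, ← mul_assoc Q, hQ'.eq, trace_mul_comm, mul_assoc, hP'.eq, trace_mul_comm]
  have hQPQP : (Q * P * (Q * P)).trace = (P * Q * (P * Q)).trace := by
    rw [mul_assoc, trace_mul_comm Q]
    simp only [Matrix.mul_assoc]
  rw [conjTranspose_sub, conjTranspose_mul, conjTranspose_mul, hP.eq, hQ.eq, sub_mul, mul_sub,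
    mul_sub, trace_sub, trace_sub, trace_sub, hQPPQ, hPQQP, hQPQP]
  ring

theorem trace_vecMulVec_mul_self (u v : m → R) :
    (vecMulVec u v * vecMulVec u v).trace = (vecMulVec u v).trace ^ 2 := by
  rw [vecMulVec_mul_vecMulVec, trace_vecMulVec, trace_vecMulVec, dotProduct_smul, smul_eq_mul,
    dotProduct_comm v, sq]

end Matrix

section PureState

variable {n : ℕ}

theorem pureState_isHermitian (ψ : Fin n → ℂ) : (pureState ψ).IsHermitian := by
  rw [IsHermitian, pureState, conjTranspose_vecMulVec, star_star]

theorem pureState_isIdempotentElem {ψ : Fin n → ℂ} (hψ : star ψ ⬝ᵥ ψ = 1) :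
    IsIdempotentElem (pureState ψ) := by
  rw [IsIdempotentElem, pureState, vecMulVec_mul_vecMulVec, hψ, one_smul]

theorem pureState_mul_pureState (ψ φ : Fin n → ℂ) :
    pureState ψ * pureState φ = vecMulVec ψ ((star ψ ⬝ᵥ φ) • star φ) :=
  vecMulVec_mul_vecMulVec _ _ _ _

theorem trace_pureState_mul_pureState (ψ φ : Fin n → ℂ) :
    (pureState ψ * pureState φ).trace = ((‖star ψ ⬝ᵥ φ‖ ^ 2 : ℝ) : ℂ) := by
  rw [pureState_mul_pureState, trace_vecMulVec, dotProduct_smul, smul_eq_mul, dotProduct_comm ψ,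
    star_dotProduct φ ψ, Complex.star_def, Complex.mul_conj, Complex.normSq_eq_norm_sq]

theorem phi_pureState {ψ φ : Fin n → ℂ} (hψ : star ψ ⬝ᵥ ψ = 1) (hφ : star φ ⬝ᵥ φ = 1) :
    Phi (pureState ψ) (pureState φ) = 4 * ‖star ψ ⬝ᵥ φ‖ ^ 2 * (1 - ‖star ψ ⬝ᵥ φ‖ ^ 2) := by
  rw [Phi, trace_conjTranspose_commutator_mul_commutator (pureState_isHermitian ψ)
    (pureState_isHermitian φ) (pureState_isIdempotentElem hψ) (pureState_isIdempotentElem hφ),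
    pureState_mul_pureState, trace_vecMulVec_mul_self, ← pureState_mul_pureState,
    trace_pureState_mul_pureState]
  norm_cast
  ring

end PureState

theorem phi_pure_le_one_iff {n : ℕ} (ψ φ : Fin n → ℂ)
    (hψ : star ψ ⬝ᵥ ψ = 1) (hφ : star φ ⬝ᵥ φ = 1) :
    Phi (pureState ψ) (pureState φ) ≤ 1 ∧
      (Phi (pureState ψ) (pureState φ) = 1 ↔ ‖star ψ ⬝ᵥ φ‖ ^ 2 = 1 / 2) := by
  rw [phi_pureState hψ hφ]
  set t := ‖star ψ ⬝ᵥ φ‖ ^ 2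
  have hdefect : 1 - 4 * t * (1 - t) = (2 * t - 1) ^ 2 := by ring
  refine ⟨by linarith [sq_nonneg (2 * t - 1)], fun h => ?_, fun h => by rw [h]; norm_num⟩
  have hsq : (2 * t - 1) ^ 2 = 0 := by linarith
  linarith [pow_eq_zero_iff two_ne_zero |>.mp hsq]
end
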